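/- If n ≥ k+1 and F ∈ ℱ(d,k,n) with max F ≥ k, then lsh(F) := ret_{n−1}(F − 1) ∈ ℱ(d,k,n−1), where F − 1 = {x − 1 : x ∈ F}. -/

import Mathlib

noncomputable section

open Finset

/-- `retr n X` : the retraction of `X`, clamping each element into `[0,n]`. -/
def retr (n : ℤ) (X : Finset ℤ) : Finset ℤ := X.image fun x => max 0 (min n x)

/-- A finite set is paired if it is a disjoint union of pairs `{y, y+1}`
of consecutive integers. -/
def IsPaired (Y : Finset ℤ) : Prop :=
  ∃ S : Finset ℤ, Y = S ∪ S.image (· + 1) ∧ ∀ a ∈ S, ∀ b ∈ S, a ≠ b → 2 ≤ |a - b|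

/-- Membership in the collection `𝒳_n(d,k)` where `d = 2m+1`:
`X = [i, i+2r-1] ∪ Y ∪ [i+k, i+k+2r-1]` with `1 ≤ r ≤ m`, `Y` a paired
`(d-2r-1)`-element subset of `[i+2r+1, i+k-2]`, and `|ret_n(X)| ≥ d`. -/
def MemX (m k n : ℕ) (X : Finset ℤ) : Prop :=
  ∃ (i : ℤ) (r : ℕ) (Y : Finset ℤ), 1 ≤ r ∧ r ≤ m ∧ IsPaired Y ∧
    Y.card = 2 * (m - r) ∧ Y ⊆ Finset.Icc (i + 2 * r + 1) (i + k - 2) ∧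
    X = Finset.Icc i (i + 2 * r - 1) ∪ Y ∪ Finset.Icc (i + k) (i + k + 2 * r - 1) ∧
    2 * m + 1 ≤ (retr n X).card

/-- `ℱ(d,k,n)` with `d = 2m+1` : the vertex sets of facets of the ordinary
polytope `P^{d,k,n}` (Dinh's theorem). -/
def Facets (m k n : ℕ) : Set (Finset ℤ) :=
  {F | ∃ X : Finset ℤ, MemX m k n X ∧ F = retr n X}

/-- Colexicographic order on finite sets of integers: `F ≺_c G` iff the maximal
element of the symmetric difference belongs to `G`. -/
def ColexLt (F G : Finset ℤ) : Prop :=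
  ∃ z ∈ G, z ∉ F ∧ ∀ w, z < w → (w ∈ F ↔ w ∈ G)

/-- `S` is a Gale subset of `[a,b]`: `S ⊆ [a,b]` and between any two elements of
`[a,b] \ S` there is an even number of elements of `S`. -/
def IsGale (a b : ℤ) (S : Finset ℤ) : Prop :=
  S ⊆ Finset.Icc a b ∧
    ∀ x ∈ Finset.Icc a b, ∀ y ∈ Finset.Icc a b,
      x ∉ S → y ∉ S → x < y → Even ((S ∩ Finset.Ioo x y).card)

/-- The maximal interval (run) of consecutive integers of `F` containing `x`
(empty if `x ∉ F`). -/
def runOf (F : Finset ℤ) (x : ℤ) : Finset ℤ :=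
  F.filter fun y => Finset.Icc (min x y) (max x y) ⊆ F

/-- The maximum element of `F` (0 by convention if `F` is empty). -/
def maxElt (F : Finset ℤ) : ℤ := WithBot.unbotD 0 F.max

/-- `E(S)` : the union over the maximal intervals `[a,b]` of `S` of
`{a+1, a+3, a+5, …} ∩ [a,b]` (the elements in even position of their run). -/
def Epos (S : Finset ℤ) : Finset ℤ :=
  @Finset.filter _
    (fun y => ∃ a : ℤ, Finset.Icc a y ⊆ S ∧ a - 1 ∉ S ∧ Odd (y - a))
    (Classical.decPred _) S

/-- `A^0(F)` for `F ∈ ℱ(d,k,n)`. -/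
def A0 (k n : ℤ) (F : Finset ℤ) : Finset ℤ :=
  if maxElt F ≤ k - 1 then runOf F 0
  else if maxElt F ≤ n - 1 then runOf F (maxElt F - k) ∪ runOf F (maxElt F - k + 2)
  else if n - k ∈ F then runOf F (n - k)
  else ∅

/-- `G_F = E(I^1) ∪ ⋯ ∪ E(I^p) ∪ I^n(F)` where `I^1, …, I^p` are the maximal
intervals of `F` disjoint from `A^0(F) ∪ I^n(F)`, and `I^n(F) = runOf F n`. -/
def GF (k n : ℤ) (F : Finset ℤ) : Finset ℤ :=
  Epos (F \ (A0 k n F ∪ runOf F n)) ∪ runOf F n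

/-- The `t`-th smallest element of `F` (1-indexed). -/
def elt (F : Finset ℤ) (t : ℕ) : ℤ := (F.sort (· ≤ ·)).getD (t - 1) 0

/-- The vertex set of the `t`-th ridge of `P^{d,k,n}` contained in the facet `F`
(with `F = {z_1 < ⋯ < z_p}`, `1 ≤ t ≤ p`):
`F(ẑ_1) = {z_1, …, z_{d-1}}`, `F(ẑ_p) = {z_{p-d+2}, …, z_p}`, and otherwise
`F(ẑ_t) = {z_ℓ : 0 < |ℓ - t| ≤ d-2}`. -/
def ridge (d : ℕ) (F : Finset ℤ) (t : ℕ) : Finset ℤ :=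
  if t = 1 then (Finset.Icc 1 (d - 1)).image (elt F)
  else if t = F.card then (Finset.Icc (F.card - d + 2) F.card).image (elt F)
  else ((Finset.Icc 1 F.card).filter fun l =>
      l ≠ t ∧ ((l : ℤ) - (t : ℤ)).natAbs ≤ d - 2).image (elt F)

/-- `T_{F,ℓ} = {z_ℓ, z_{ℓ+1}, …, z_{ℓ+d-1}}` : the `d` consecutive elements of
`F` starting at position `ℓ` (1-indexed). -/
def Tsimp (d : ℕ) (F : Finset ℤ) (l : ℕ) : Finset ℤ :=
  (Finset.Icc l (l + d - 1)).image (elt F)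

/-- Helper for `U_{F,ℓ}`: `Uaux m k n F j = U_{F, (p-d+1)-j}` where `p = |F|`,
`d = 2m+1`. -/
def Uaux (m k n : ℕ) (F : Finset ℤ) : ℕ → Finset ℤ
  | 0 => GF k n F
  | j + 1 =>
    (Uaux m k n F j \ {maxElt (Tsimp (2 * m + 1) F (F.card - (2 * m + 1) + 1 - j))}) ∪
      {maxElt (Tsimp (2 * m + 1) F (F.card - (2 * m + 1) + 1 - j)) - (k : ℤ),
       maxElt (Tsimp (2 * m + 1) F (F.card - (2 * m + 1) + 1 - j)) - 1}

/-- `U_{F,ℓ}` : `U_{F,p-d+1} = G_F` and, for `1 ≤ ℓ ≤ p-d`,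
`U_{F,ℓ} = (U_{F,ℓ+1} \ {z}) ∪ {z-k, z-1}` where `z = max T_{F,ℓ+1}`. -/
def Usimp (m k n : ℕ) (F : Finset ℤ) (l : ℕ) : Finset ℤ :=
  Uaux m k n F (F.card - (2 * m + 1) + 1 - l)

/-! The witness for `lsh F` is the translate `X - 1` of a witness `X` for `F`: it has the same
shape with `i` replaced by `i - 1`, so only the size condition `|ret_{n-1}(X - 1)| ≥ d` needs an
argument. On `F ⊆ [0, n]`, `lsh` acts as `y ↦ max 0 (y - 1)`, which is injective except that it
merges `0` and `1`; hence `|lsh F| = |F| ≥ d` unless `0, 1 ∈ F`. In that case `i ≤ 0`, and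
`max F ≥ k` gives `i + 2r - 1 ≥ 0`, which keeps `Y` and the last block above `1`; so `1` lies in
the first block, and `F = [0, i+2r-1] ∪ Y ∪ [i+k, min n (i+k+2r-1)]` has
`2m + min (i+2r) (n-k+1) ≥ d + 1` elements. -/

open Finset

lemma image_sub_const_Icc (a b c : ℤ) : (Icc a b).image (· - c) = Icc (a - c) (b - c) := by
  simpa only [← sub_eq_add_neg] using image_add_right_Icc a b (-c)

lemma retr_subset_Icc {n : ℤ} (hn : 0 ≤ n) (X : Finset ℤ) : retr n X ⊆ Icc 0 n := by
  intro y hy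
  obtain ⟨x, -, rfl⟩ := mem_image.mp hy
  exact mem_Icc.mpr ⟨le_max_left _ _, by omega⟩

lemma retr_eq_self {n : ℤ} {Y : Finset ℤ} (hY : Y ⊆ Icc 0 n) : retr n Y = Y := by
  refine (image_congr fun y hy => ?_).trans image_id'
  have := mem_Icc.mp (hY hy)
  omega

lemma retr_Icc (n : ℤ) {a b : ℤ} (hab : a ≤ b) :
    retr n (Icc a b) = Icc (max 0 (min n a)) (max 0 (min n b)) := by
  ext y
  simp only [retr, mem_image, mem_Icc]
  constructor
  · rintro ⟨x, hx, rfl⟩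
    omega
  · intro hy
    exact ⟨max a (min b y), by omega, by omega⟩

lemma retr_union (n : ℤ) (A B : Finset ℤ) : retr n (A ∪ B) = retr n A ∪ retr n B :=
  image_union _ _

lemma retr_sub_one_retr (n : ℤ) (X : Finset ℤ) :
    retr (n - 1) ((retr n X).image (· - 1)) = retr (n - 1) (X.image (· - 1)) := by
  simp only [retr, image_image]
  exact image_congr fun x _ => by simp only [Function.comp_apply]; omega

lemma retr_sub_one_eq_image {n : ℤ} {F : Finset ℤ} (hF : F ⊆ Icc 0 n) :
    retr (n - 1) (F.image (· - 1)) = F.image fun y => max 0 (y - 1) := by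
  simp only [retr, image_image]
  refine image_congr fun y hy => ?_
  have := mem_Icc.mp (hF hy)
  simp only [Function.comp_apply]
  omega

lemma exists_le_mem_of_le_maxElt {F : Finset ℤ} {a : ℤ} (ha : 0 < a) (h : a ≤ maxElt F) :
    ∃ y ∈ F, a ≤ y := by
  rcases F.eq_empty_or_nonempty with rfl | hF
  · simp only [maxElt, max_empty, WithBot.unbotD_bot] at h
    omega
  · refine ⟨F.max' hF, F.max'_mem hF, ?_⟩
    rwa [maxElt, ← coe_max' hF, WithBot.unbotD_coe] at h

section Predecessor

variable {F : Finset ℤ} (hF : ∀ y ∈ F, 0 ≤ y)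
include hF

lemma card_le_card_image_pred_add_one :
    F.card ≤ (F.image fun y => max 0 (y - 1)).card + 1 := by
  have hinj : Set.InjOn (fun y => max 0 (y - 1)) (F.erase 0 : Set ℤ) := by
    intro x hx y hy hxy
    have := hF x (mem_of_mem_erase hx)
    have := hF y (mem_of_mem_erase hy)
    have := ne_of_mem_erase hx
    have := ne_of_mem_erase hy
    simp only at hxy
    omega
  calc F.card ≤ (F.erase 0).card + 1 := Nat.sub_le_iff_le_add.mp pred_card_le_card_erase
    _ = ((F.erase 0).image fun y => max 0 (y - 1)).card + 1 := by rw [card_image_of_injOn hinj]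
    _ ≤ (F.image fun y => max 0 (y - 1)).card + 1 := by
      gcongr
      exact erase_subset _ _

lemma card_image_pred_of_not_zero_one_mem (h01 : ¬ ((0 : ℤ) ∈ F ∧ (1 : ℤ) ∈ F)) :
    (F.image fun y => max 0 (y - 1)).card = F.card := by
  refine card_image_of_injOn fun x hx y hy hxy => ?_
  have := hF x hx
  have := hF y hy
  by_contra hne
  have : x = 0 ∧ y = 1 ∨ x = 1 ∧ y = 0 := by omega
  rcases this with ⟨rfl, rfl⟩ | ⟨rfl, rfl⟩
  exacts [h01 ⟨hx, hy⟩, h01 ⟨hy, hx⟩]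

end Predecessor

lemma IsPaired.image_sub {Y : Finset ℤ} (hY : IsPaired Y) (c : ℤ) :
    IsPaired (Y.image (· - c)) := by
  obtain ⟨S, rfl, hS⟩ := hY
  refine ⟨S.image (· - c), ?_, ?_⟩
  · rw [image_union, image_image, image_image]
    congr 1
    exact image_congr fun x _ => by simp only [Function.comp_apply]; ring
  · simp only [mem_image]
    rintro _ ⟨a, ha, rfl⟩ _ ⟨b, hb, rfl⟩ hab
    rw [sub_sub_sub_cancel_right]
    exact hS a ha b hb fun h => hab (h ▸ rfl)

lemma MemX.image_sub {m k n n' : ℕ} {X : Finset ℤ} (hX : MemX m k n X) (c : ℤ)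
    (hcard : 2 * m + 1 ≤ (retr n' (X.image (· - c))).card) :
    MemX m k n' (X.image (· - c)) := by
  obtain ⟨i, r, Y, hr1, hrm, hYp, hYc, hYs, rfl, -⟩ := hX
  refine ⟨i - c, r, Y.image (· - c), hr1, hrm, hYp.image_sub c, ?_, ?_, ?_, hcard⟩
  · rwa [card_image_of_injective _ sub_left_injective]
  · refine (image_subset_image hYs).trans ?_
    rw [image_sub_const_Icc]
    exact Icc_subset_Icc (by omega) (by omega)
  · rw [image_union, image_union, image_sub_const_Icc, image_sub_const_Icc]
    ring_nf

section Shape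

variable {k : ℕ} {i : ℤ} {r : ℕ} {Y : Finset ℤ} (hY : Y ⊆ Icc (i + 2 * r + 1) (i + k - 2))
include hY

lemma mem_shape_bounds {x : ℤ}
    (hx : x ∈ Icc i (i + 2 * r - 1) ∪ Y ∪ Icc (i + k) (i + k + 2 * r - 1)) :
    i ≤ x ∧ x ≤ i + k + 2 * r - 1 := by
  simp only [mem_union, mem_Icc] at hx
  rcases hx with (hx | hx) | hx
  · omega
  · have := mem_Icc.mp (hY hx); omega
  · omega

lemma retr_shape_of_nonpos {n : ℕ} (hi : i ≤ 0) (hi' : 0 ≤ i + 2 * r - 1) (hrk : 2 * r < k)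
    (hkn : k ≤ n) :
    retr n (Icc i (i + 2 * r - 1) ∪ Y ∪ Icc (i + k) (i + k + 2 * r - 1)) =
      Icc 0 (i + 2 * r - 1) ∪ Y ∪ Icc (i + k) (min n (i + k + 2 * r - 1)) := by
  have hYn : Y ⊆ Icc 0 n := hY.trans (Icc_subset_Icc (by omega) (by omega))
  rw [retr_union, retr_union, retr_Icc _ (by omega), retr_Icc _ (by omega), retr_eq_self hYn]
  congr 3 <;> omega

lemma two_mul_add_two_le_card_retr_shape {m n : ℕ} (hYc : Y.card = 2 * (m - r)) (hrm : r ≤ m)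
    (hi : i ≤ 0) (hi' : 1 ≤ i + 2 * r - 1) (hrk : 2 * r < k) (hkn : k + 1 ≤ n) :
    2 * m + 2 ≤ (retr n (Icc i (i + 2 * r - 1) ∪ Y ∪ Icc (i + k) (i + k + 2 * r - 1))).card := by
  have hYb : ∀ y ∈ Y, i + 2 * r + 1 ≤ y ∧ y ≤ i + k - 2 := fun y hy => mem_Icc.mp (hY hy)
  have hLY : Disjoint (Icc 0 (i + 2 * r - 1)) Y :=
    disjoint_left.mpr fun y hL hY' => by have := mem_Icc.mp hL; have := hYb y hY'; omega
  have hLYR :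
      Disjoint (Icc 0 (i + 2 * r - 1) ∪ Y) (Icc (i + k) (min n (i + k + 2 * r - 1))) := by
    refine disjoint_left.mpr fun y hLY hR => ?_
    have := mem_Icc.mp hR
    rcases mem_union.mp hLY with hL | hY'
    · have := mem_Icc.mp hL; omega
    · have := hYb y hY'; omega
  rw [retr_shape_of_nonpos hY hi (by omega) hrk (by omega), card_union_of_disjoint hLYR,
    card_union_of_disjoint hLY, Int.card_Icc, Int.card_Icc, hYc]
  omega

end Shape

lemma MemX.two_mul_add_two_le_card_retr {m k n : ℕ} {X : Finset ℤ} (hX : MemX m k n X)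
    (hk : 2 * m + 1 ≤ k) (hn : k + 1 ≤ n) {y : ℤ} (hy : y ∈ retr n X) (hky : (k : ℤ) ≤ y)
    (h0 : (0 : ℤ) ∈ retr n X) (h1 : (1 : ℤ) ∈ retr n X) : 2 * m + 2 ≤ (retr n X).card := by
  obtain ⟨i, r, Y, -, hrm, -, hYc, hYs, rfl, -⟩ := hX
  obtain ⟨x₀, hx₀, hx₀0⟩ := mem_image.mp h0
  obtain ⟨x, hx, rfl⟩ := mem_image.mp hy
  have hi : i ≤ 0 := by have := mem_shape_bounds hYs hx₀; omega
  have hi' : 0 ≤ i + 2 * r - 1 := by have := mem_shape_bounds hYs hx; omega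
  have hrk : 2 * r < k := by omega
  have h1L : 1 ≤ i + 2 * r - 1 := by
    rw [retr_shape_of_nonpos hYs hi hi' hrk (by omega)] at h1
    simp only [mem_union, mem_Icc] at h1
    rcases h1 with (h | h) | h
    · omega
    · have := mem_Icc.mp (hYs h); omega
    · omega
  exact two_mul_add_two_le_card_retr_shape hYs hYc hrm hi h1L hrk hn

theorem statement1_general (m k n : ℕ) (hk : 2 * m + 1 ≤ k) (hn : k + 1 ≤ n)
    (F : Finset ℤ) (hF : F ∈ Facets m k n) (hmax : (k : ℤ) ≤ maxElt F) :
    retr ((n - 1 : ℕ) : ℤ) (F.image (· - 1)) ∈ Facets m k (n - 1) := by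
  obtain ⟨X, hX, rfl⟩ := hF
  have hcast : ((n - 1 : ℕ) : ℤ) = n - 1 := by omega
  have hFn : retr n X ⊆ Icc 0 (n : ℤ) := retr_subset_Icc (by omega) X
  have hF0 : ∀ y ∈ retr n X, 0 ≤ y := fun y hy => (mem_Icc.mp (hFn hy)).1
  have hcard : 2 * m + 1 ≤ ((retr n X).image fun y => max 0 (y - 1)).card := by
    by_cases h01 : (0 : ℤ) ∈ retr n X ∧ (1 : ℤ) ∈ retr n X
    · obtain ⟨y, hy, hky⟩ := exists_le_mem_of_le_maxElt (by omega) hmax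
      have := hX.two_mul_add_two_le_card_retr hk hn hy hky h01.1 h01.2
      have := card_le_card_image_pred_add_one hF0
      omega
    · obtain ⟨-, -, -, -, -, -, -, -, -, hXcard⟩ := hX
      rwa [card_image_pred_of_not_zero_one_mem hF0 h01]
  have hlsh : retr ((n - 1 : ℕ) : ℤ) ((retr n X).image (· - 1)) =
      retr ((n - 1 : ℕ) : ℤ) (X.image (· - 1)) := by
    rw [hcast, retr_sub_one_retr]
  refine ⟨X.image (· - 1), hX.image_sub 1 ?_, hlsh⟩
  rwa [← hlsh, hcast, retr_sub_one_eq_image hFn]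

/-- if n ≥ k+1 and F ∈ ℱ(d,k,n) with max F ≥ k, then
lsh(F) = ret_{n-1}(F - 1) ∈ ℱ(d,k,n-1). -/
theorem statement1 (m k n : ℕ) (hm : 2 ≤ m) (hk : 2 * m + 1 ≤ k) (hn : k + 1 ≤ n)
    (F : Finset ℤ) (hF : F ∈ Facets m k n) (hmax : (k : ℤ) ≤ maxElt F) :
    retr ((n - 1 : ℕ) : ℤ) (F.image (· - 1)) ∈ Facets m k (n - 1) :=
  statement1_general m k n hk hn F hF hmax
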